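/- When γ = 0, the ncDNA capacity satisfies C_nc = 2 − h((1/2) + (1/2)(1−2q)ᵐ), where h is the binary entropy function, and lim_{m→∞} C_nc|_{γ=0} = 1 for 0 < q < 1/2. -/
import Mathlib


open Real Filter

/-- Binary entropy function (in bits). -/
noncomputable def binEnt (p : ℝ) : ℝ := -(p * logb 2 p) - (1 - p) * logb 2 (1 - p)

theorem ncDNA_capacity_gamma_zero (q : ℝ) (hq0 : 0 < q) (hq1 : q < 1 / 2) :
    (∀ m : ℕ,
      2 - (-((1 + 2 * (1 - 2 * q) ^ m + (1 : ℝ) ^ m) / 4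
              * logb 2 ((1 + 2 * (1 - 2 * q) ^ m + (1 : ℝ) ^ m) / 4)
            + (1 - 2 * (1 - 2 * q) ^ m + (1 : ℝ) ^ m) / 4
              * logb 2 ((1 - 2 * (1 - 2 * q) ^ m + (1 : ℝ) ^ m) / 4)
            + (1 - (1 : ℝ) ^ m) / 2 * logb 2 ((1 - (1 : ℝ) ^ m) / 4)))
        = 2 - binEnt (1 / 2 + (1 / 2) * (1 - 2 * q) ^ m)) ∧
    Tendsto (fun m : ℕ => 2 - binEnt (1 / 2 + (1 / 2) * (1 - 2 * q) ^ m))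
      atTop (nhds 1) := by
  constructor
  · intro m
    set x : ℝ := (1 - 2 * q) ^ m with hx
    have h1 : (1 + 2 * x + (1 : ℝ) ^ m) / 4 = 1 / 2 + 1 / 2 * x := by
      rw [one_pow]; ring
    have h2 : (1 - 2 * x + (1 : ℝ) ^ m) / 4 = 1 - (1 / 2 + 1 / 2 * x) := by
      rw [one_pow]; ring
    have h3 : (1 - (1 : ℝ) ^ m) / 2 = 0 := by rw [one_pow]; ring
    rw [h1, h2, h3, zero_mul, add_zero, binEnt]
    ring
  · have habs : |1 - 2 * q| < 1 := by rw [abs_lt]; constructor <;> linarith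
    have hx : Tendsto (fun m : ℕ => (1 - 2 * q) ^ m) atTop (nhds 0) :=
      tendsto_pow_atTop_nhds_zero_of_abs_lt_one habs
    have hp : Tendsto (fun m : ℕ => 1 / 2 + (1 / 2) * (1 - 2 * q) ^ m) atTop
        (nhds (1 / 2 : ℝ)) := by
      have := (hx.const_mul (1 / 2 : ℝ)).const_add (1 / 2 : ℝ)
      simpa using this
    have hcont : ContinuousAt binEnt (1 / 2 : ℝ) := by
      unfold binEnt
      apply ContinuousAt.sub
      · exact (continuousAt_id.mul (Real.continuousAt_logb (by norm_num))).neg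
      · apply ContinuousAt.mul
        · exact continuousAt_const.sub continuousAt_id
        · have : ContinuousAt (logb 2) ((1 : ℝ) - 1 / 2) :=
            Real.continuousAt_logb (by norm_num)
          exact this.comp (continuousAt_const.sub continuousAt_id)
    have hbe : Tendsto (fun m : ℕ => binEnt (1 / 2 + (1 / 2) * (1 - 2 * q) ^ m))
        atTop (nhds (binEnt (1 / 2))) := hcont.tendsto.comp hp
    have hval : binEnt (1 / 2 : ℝ) = 1 := by
      have h : Real.logb 2 (1 / 2 : ℝ) = -1 := by
        rw [show (1 / 2 : ℝ) = 2⁻¹ by norm_num, Real.logb_inv, Real.logb_self_eq_one] ; norm_num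
      unfold binEnt
      rw [show (1 : ℝ) - 1 / 2 = 1 / 2 by norm_num, h]
      ring
    rw [hval] at hbe
    have h2 := hbe.const_sub (2 : ℝ)
    rw [show (2 : ℝ) - 1 = 1 by norm_num] at h2
    exact h2
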